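/- arXiv:0910.1076 — 3 statements merged into one kernel-verified Lean document; each statement's English description precedes it below -/
import Mathlib

section
/- Let $k$ be a field and let $R \subset k[x,t]$ be the $k$-subalgebra consisting of polynomials $\sum_m f_m(x) t^m$ such that $f_1(x) = x^{-1}f_0'(x)$ (i.e., $x$ divides $f_0'$ and $f_1 = f_0'/x$). Then $R$ is generated as a $k$-algebra by the six elements $x^2+2t,\ x^3+3xt,\ t^2,\ xt^2,\ t^3,\ xt^3$. -/
/-!
Every element of `R` is `f₀ + (f₀'/x) t` plus a multiple of `t²`.
The elements `t², t³, xt², xt³` together with `x²t^m = (x² + 2t) t^m - 2 t^{m+1}` give all of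
`k[x] t^m` for `m ≥ 2`. For `f₀ = xⁿ` the element `uₙ = xⁿ + n x^{n-2} t` satisfies
`u₂ uₙ = u_{n+2} + 2n x^{n-2} t²`, so all `uₙ` lie in the algebra generated by `u₂, u₃` and `t²`.
-/

open Polynomial

section

variable (k : Type*) [CommRing k]

def derivSubalgebra : Subalgebra k k[X][X] where
  carrier := {p | X * p.coeff 1 = derivative (p.coeff 0)}
  add_mem' {p q} hp hq := by
    simp only [Set.mem_ofPred_eq, coeff_add, derivative_add, mul_add] at *
    rw [hp, hq]
  mul_mem' {p q} hp hq := by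
    simp only [Set.mem_ofPred_eq, mul_coeff_one, mul_coeff_zero, derivative_mul] at *
    rw [← hp, ← hq]
    ring
  algebraMap_mem' r := by simp [Polynomial.algebraMap_apply, coeff_C]

def generators : Set k[X][X] :=
  {C X ^ 2 + 2 * X, C X ^ 3 + 3 * C X * X, X ^ 2, C X * X ^ 2, X ^ 3, C X * X ^ 3}

local notation "𝒜" => Algebra.adjoin k (generators k)

variable {k}

theorem mem_derivSubalgebra {p : k[X][X]} :
    p ∈ derivSubalgebra k ↔ X * p.coeff 1 = derivative (p.coeff 0) := Iff.rfl

theorem generators_subset_derivSubalgebra : generators k ⊆ derivSubalgebra k := by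
  rintro p (rfl | rfl | rfl | rfl | rfl | rfl) <;>
    simp only [SetLike.mem_coe, mem_derivSubalgebra, coeff_add, ← C_pow, coeff_C, coeff_ofNat_mul,
      coeff_X, coeff_X_pow, coeff_C_mul, derivative_mul, derivative_X] <;>
    norm_num
  all_goals rw [map_ofNat]; ring

theorem X_pow_mem_adjoin {m : ℕ} (hm : 2 ≤ m) : (X : k[X][X]) ^ m ∈ 𝒜 := by
  have sq_mem : (X : k[X][X]) ^ 2 ∈ 𝒜 := Algebra.subset_adjoin (by simp [generators])
  obtain ⟨a, rfl | rfl⟩ := Nat.even_or_odd' m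
  · rw [pow_mul]
    exact pow_mem sq_mem a
  · obtain ⟨a, rfl⟩ := Nat.exists_eq_add_of_le' (show 1 ≤ a by omega)
    rw [show 2 * (a + 1) + 1 = 2 * a + 3 by ring, pow_add, pow_mul]
    exact mul_mem (pow_mem sq_mem a) (Algebra.subset_adjoin (by simp [generators]))

theorem C_X_mul_X_pow_mem_adjoin {m : ℕ} (hm : 2 ≤ m) : C X * (X : k[X][X]) ^ m ∈ 𝒜 := by
  obtain ⟨m, rfl⟩ := Nat.exists_eq_add_of_le' hm
  rcases lt_or_ge m 2 with hm | hm
  · interval_cases m <;> exact Algebra.subset_adjoin (by simp [generators])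
  · rw [show C X * (X : k[X][X]) ^ (m + 2) = C X * X ^ 2 * X ^ m by ring]
    exact mul_mem (Algebra.subset_adjoin (by simp [generators])) (X_pow_mem_adjoin hm)

theorem C_X_pow_mul_X_pow_mem_adjoin (a : ℕ) {m : ℕ} (hm : 2 ≤ m) :
    C X ^ a * (X : k[X][X]) ^ m ∈ 𝒜 := by
  induction a using Nat.twoStepInduction generalizing m with
  | zero => simpa using X_pow_mem_adjoin hm
  | one => simpa using C_X_mul_X_pow_mem_adjoin hm
  | more a ih _ =>
    have : C X ^ (a + 2) * (X : k[X][X]) ^ m =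
        (C X ^ 2 + 2 * X) * (C X ^ a * X ^ m) - 2 * (C X ^ a * X ^ (m + 1)) := by ring
    rw [this]
    exact sub_mem (mul_mem (Algebra.subset_adjoin (by simp [generators])) (ih hm))
      (mul_mem (ofNat_mem _ 2) (ih (by omega)))

theorem C_mul_X_pow_mem_adjoin (f : k[X]) {m : ℕ} (hm : 2 ≤ m) :
    C f * (X : k[X][X]) ^ m ∈ 𝒜 := by
  induction f using Polynomial.induction_on' with
  | add f g hf hg => simpa only [map_add, add_mul] using add_mem hf hg
  | monomial n a =>
    rw [← C_mul_X_pow_eq_monomial, map_mul, map_pow, mul_assoc]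
    exact mul_mem (algebraMap_mem _ a) (C_X_pow_mul_X_pow_mem_adjoin n hm)

theorem X_sq_mul_mem_adjoin (q : k[X][X]) : X ^ 2 * q ∈ 𝒜 := by
  induction q using Polynomial.induction_on' with
  | add p q hp hq => simpa only [mul_add] using add_mem hp hq
  | monomial n f =>
    rw [← C_mul_X_pow_eq_monomial, mul_left_comm, ← pow_add]
    exact C_mul_X_pow_mem_adjoin f (by omega)

/-- `f + (f'/x) t`, after removing the linear term of `f` so that the map is additive and lands
in `R`; on `f` with `x ∣ f'` nothing is removed. -/
noncomputable def derivLift (f : k[X]) : k[X][X] :=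
  C (f - C (f.coeff 1) * X) + C (divX (derivative f)) * X

theorem derivLift_add (f g : k[X]) : derivLift (f + g) = derivLift f + derivLift g := by
  simp only [derivLift, coeff_add, map_add, divX_add, map_sub, map_mul]
  ring

theorem derivLift_C_mul (a : k) (f : k[X]) : derivLift (C a * f) = C (C a) * derivLift f := by
  simp only [derivLift, coeff_C_mul, derivative_C_mul, divX_C_mul, map_sub, map_mul]
  ring

theorem derivLift_X_pow_add_two (n : ℕ) :
    derivLift (X ^ (n + 2) : k[X]) = C (X ^ (n + 2)) + C ((n + 2) * X ^ n) * X := by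
  simp only [derivLift, coeff_X_pow, derivative_X_pow, divX_C_mul_X_pow]
  simp [map_ofNat]

theorem derivLift_X_pow_add_two_mem_adjoin (n : ℕ) : derivLift (X ^ (n + 2) : k[X]) ∈ 𝒜 := by
  have sq_mem : derivLift (X ^ 2 : k[X]) ∈ 𝒜 :=
    Algebra.subset_adjoin (by simp [generators, derivLift_X_pow_add_two 0, map_ofNat])
  induction n using Nat.twoStepInduction with
  | zero => exact sq_mem
  | one =>
    refine Algebra.subset_adjoin (Or.inr (Or.inl ?_))
    simp only [derivLift_X_pow_add_two]
    norm_num [map_ofNat]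
  | more n ih _ =>
    have : derivLift (X ^ (n + 4) : k[X]) = derivLift (X ^ 2) * derivLift (X ^ (n + 2)) -
        ((2 * (n + 2) : ℕ) : k[X][X]) * (C X ^ n * X ^ 2) := by
      simp only [derivLift_X_pow_add_two, derivLift_X_pow_add_two 0, map_add, map_mul, map_pow,
        map_natCast, map_ofNat]
      push_cast
      ring
    rw [this]
    exact sub_mem (mul_mem sq_mem ih)
      (mul_mem (natCast_mem _ _) (C_X_pow_mul_X_pow_mem_adjoin n le_rfl))

theorem derivLift_X_pow_mem_adjoin (n : ℕ) : derivLift (X ^ n : k[X]) ∈ 𝒜 := by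
  match n with
  | 0 => simp [derivLift, coeff_one]
  | 1 => simp [derivLift]
  | n + 2 => exact derivLift_X_pow_add_two_mem_adjoin n

theorem derivLift_mem_adjoin (f : k[X]) : derivLift f ∈ 𝒜 := by
  induction f using Polynomial.induction_on' with
  | add f g hf hg => simpa only [derivLift_add] using add_mem hf hg
  | monomial n a =>
    rw [← C_mul_X_pow_eq_monomial, derivLift_C_mul]
    exact mul_mem (algebraMap_mem _ a) (derivLift_X_pow_mem_adjoin n)

theorem derivLift_of_X_mul_eq_derivative {f g : k[X]} (h : X * g = derivative f) :
    derivLift f = C f + C g * X := by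
  have coeff_one_eq_zero : f.coeff 1 = 0 := by
    simpa [coeff_derivative] using congrArg (coeff · 0) h.symm
  have divX_eq : divX (derivative f) = g := by
    ext n
    simp [← h, coeff_X_mul]
  simp [derivLift, coeff_one_eq_zero, divX_eq]

theorem derivSubalgebra_le_adjoin : derivSubalgebra k ≤ 𝒜 := by
  intro p hp
  have decomp : p = derivLift (p.coeff 0) + X ^ 2 * divX (divX p) := by
    rw [derivLift_of_X_mul_eq_derivative hp]
    conv_lhs => rw [← X_mul_divX_add p, ← X_mul_divX_add (divX p)]
    simp only [coeff_divX, zero_add]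
    ring
  rw [decomp]
  exact add_mem (derivLift_mem_adjoin _) (X_sq_mul_mem_adjoin _)

end

/-- The subring `R ⊂ k[x,t]` of polynomials `∑ fₘ(x) tᵐ` with `x·f₁ = f₀'`
is generated as a `k`-algebra by `x²+2t, x³+3xt, t², xt², t³, xt³`.
Here `k[x,t]` is modelled as `(k[x])[t]`, with `x` the inner and `t` the outer variable. -/
theorem stmt_5 (k : Type*) [Field k] :
    (Algebra.adjoin k
        ({(C (X : Polynomial k)) ^ 2 + 2 * X,
          (C (X : Polynomial k)) ^ 3 + 3 * C (X : Polynomial k) * X,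
          X ^ 2,
          C (X : Polynomial k) * X ^ 2,
          X ^ 3,
          C (X : Polynomial k) * X ^ 3} :
          Set (Polynomial (Polynomial k))) :
        Set (Polynomial (Polynomial k)))
      = {p : Polynomial (Polynomial k) |
          (X : Polynomial k) * p.coeff 1 = derivative (p.coeff 0)} :=
  congrArg SetLike.coe <|
    le_antisymm (Algebra.adjoin_le generators_subset_derivSubalgebra) derivSubalgebra_le_adjoin
end

section
/- Let $k$ be a field and $R \subset k[x,t]$ the subring of elements $f_0(x) + f_1(x)t + f_2(x)t^2 + \cdots$ with $x f_1(x) = f_0'(x)$. Give $x^{-1}k[x]$ its natural $k[x,t]$-module structure via the quotient $k[x,t] \to k[x]$ (so that $t$ acts as zero). Then the map $\phi: k[x,t] \to x^{-1}k[x]$ defined by $\phi(\sum_m f_m(x)t^m) = f_1(x) - x^{-1}f_0'(x)$ is an $R$-module homomorphism with kernel exactly $R$. -/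
open Polynomial

/-- The subring `R ⊂ k[x,t]` cut out by `x·f₁ = f₀'`. -/
def Rcond (k : Type*) [Field k] : Set (Polynomial (Polynomial k)) :=
  {p : Polynomial (Polynomial k) |
    (X : Polynomial k) * p.coeff 1 = derivative (p.coeff 0)}

/-- The ring map `k[x,t] → k[x,x⁻¹]`, `t ↦ 0`, `x ↦ x`, giving the
`k[x,t]`-module structure on `x⁻¹ k[x] ⊂ k[x,x⁻¹]`. -/
noncomputable def sigmaMap (k : Type*) [Field k] :
    Polynomial (Polynomial k) →+* LaurentPolynomial k :=
  (Polynomial.toLaurent).comp (evalRingHom (0 : Polynomial k))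

/-- The map `φ(∑ fₘ tᵐ) = f₁ - x⁻¹ f₀'`. -/
noncomputable def phiMap (k : Type*) [Field k] (p : Polynomial (Polynomial k)) :
    LaurentPolynomial k :=
  Polynomial.toLaurent (p.coeff 1)
    - LaurentPolynomial.T (-1) * Polynomial.toLaurent (derivative (p.coeff 0))

lemma Tneg_mul_X_toLaurent (k : Type*) [Field k] (q : Polynomial k) :
    LaurentPolynomial.T (-1) * Polynomial.toLaurent (X * q) = Polynomial.toLaurent q := by
  rw [map_mul, Polynomial.toLaurent_X, ← mul_assoc, ← LaurentPolynomial.T_add]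
  norm_num

/-- `φ : k[x,t] → x⁻¹k[x]`, `φ(∑ fₘ tᵐ) = f₁ - x⁻¹f₀'`, is an `R`-module homomorphism
(for the module structure via `t ↦ 0`), lands in `x⁻¹ k[x]`, and its kernel is exactly `R`. -/
theorem stmt_6 (k : Type*) [Field k] :
    (∀ p q : Polynomial (Polynomial k), phiMap k (p + q) = phiMap k p + phiMap k q) ∧
    (∀ r ∈ Rcond k, ∀ p : Polynomial (Polynomial k),
        phiMap k (r * p) = sigmaMap k r * phiMap k p) ∧
    (∀ p : Polynomial (Polynomial k),
        ∃ q : Polynomial k, phiMap k p = LaurentPolynomial.T (-1) * Polynomial.toLaurent q) ∧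
    (∀ p : Polynomial (Polynomial k), phiMap k p = 0 ↔ p ∈ Rcond k) := by
  refine ⟨?_, ?_, ?_, ?_⟩
  · intro p q
    simp only [phiMap, coeff_add, derivative_add, map_add]
    ring
  · intro r hr p
    have hr' : (X : Polynomial k) * r.coeff 1 = derivative (r.coeff 0) := hr
    have he : ∀ q : Polynomial (Polynomial k), eval 0 q = q.coeff 0 := fun q =>
      (Polynomial.coeff_zero_eq_eval_zero q).symm
    simp only [phiMap, sigmaMap, RingHom.comp_apply, coe_evalRingHom, he]
    have h0 : (r * p).coeff 0 = r.coeff 0 * p.coeff 0 := by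
      simp [Polynomial.coeff_zero_eq_eval_zero]
    have h1 : (r * p).coeff 1 = r.coeff 0 * p.coeff 1 + r.coeff 1 * p.coeff 0 := by
      rw [Polynomial.coeff_mul]
      rw [Finset.Nat.sum_antidiagonal_eq_sum_range_succ_mk]
      simp [Finset.sum_range_succ]
    rw [h0, h1, derivative_mul, ← hr']
    simp only [map_add, map_mul, Polynomial.toLaurent_X]
    have hT : LaurentPolynomial.T (-1 : ℤ) * LaurentPolynomial.T 1 = (1 : LaurentPolynomial k) := by
      rw [← LaurentPolynomial.T_add]; norm_num
    linear_combination (-(Polynomial.toLaurent (r.coeff 1) * Polynomial.toLaurent (p.coeff 0))) * hT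
  · intro p
    refine ⟨X * p.coeff 1 - derivative (p.coeff 0), ?_⟩
    rw [map_sub, mul_sub, Tneg_mul_X_toLaurent, phiMap]
  · intro p
    rw [phiMap, sub_eq_zero]
    constructor
    · intro h
      have := congrArg (LaurentPolynomial.T (1 : ℤ) * ·) h
      rw [← mul_assoc, ← LaurentPolynomial.T_add] at this
      norm_num at this
      rw [mul_comm] at this
      apply Polynomial.toLaurent_injective
      rw [map_mul, Polynomial.toLaurent_X, this]
    · intro h
      have hr' : (X : Polynomial k) * p.coeff 1 = derivative (p.coeff 0) := h
      rw [← hr', Tneg_mul_X_toLaurent]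
end

section
/- Let $k$ be a field and $Q \subset k[y,t]$ the $k$-subalgebra generated by $\{y^n - n y^{n+2} t : n \geq 1\}$ and $\{y^n t^m : n \geq 0, m \geq 2\}$. Then an element $f(y) + g(y)t + (\text{terms of degree} \geq 2 \text{ in } t)$ of $k[y,t]$ lies in $Q$ if and only if $g(y) = -y^3 f'(y)$. -/
/-!
`f ↦ -y³ f'` is the `k`-derivation `D` of `k[y]` with `D y = -y³`, so the claim is that `Q` is the
set of `p` with `coeff₁ p = D (coeff₀ p)`. That set is a subalgebra by Leibniz' rule (modulo `t²`
it is the image of the algebra map `a ↦ a + (D a) t`), and it contains the generators since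
`yⁿ - n yⁿ⁺² t = yⁿ + D(yⁿ) t`. Conversely such a `p` is `p₀ + (D p₀) t` plus an element of
`t² k[y][t]`, and both summands are `k`-linear combinations of generators because the `yⁿ` span
`k[y]`.
-/

open Polynomial

theorem Submodule.map_mem_of_span_eq_top {k M N : Type*} [Semiring k] [AddCommMonoid M]
    [Module k M] [AddCommMonoid N] [Module k N] {T : Set M} (hT : Submodule.span k T = ⊤)
    {A : Submodule k N} (L : M →ₗ[k] N) (hL : ∀ a ∈ T, L a ∈ A) (a : M) : L a ∈ A := by
  have : Submodule.span k T ≤ A.comap L := Submodule.span_le.2 hL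
  exact this (hT ▸ Submodule.mem_top)

namespace Derivation

variable {k R : Type*} [CommSemiring k] [CommRing R] [Algebra k R]

def jetSubalgebra (D : Derivation k R R) : Subalgebra k R[X] where
  carrier := {p | p.coeff 1 = D (p.coeff 0)}
  mul_mem' {p q} hp hq := by
    simp only [Set.mem_ofPred_eq, mul_coeff_one, mul_coeff_zero, leibniz, smul_eq_mul] at *
    rw [hp, hq]
    ring
  add_mem' {p q} hp hq := by
    simp only [Set.mem_ofPred_eq, coeff_add, map_add] at *
    rw [hp, hq]
  algebraMap_mem' c := by
    simp [Polynomial.algebraMap_apply, coeff_C]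

variable (D : Derivation k R R)

theorem mem_jetSubalgebra {p : R[X]} : p ∈ D.jetSubalgebra ↔ p.coeff 1 = D (p.coeff 0) :=
  Iff.rfl

noncomputable def firstOrderJet : R →ₗ[k] R[X] where
  toFun a := C a + C (D a) * X
  map_add' a b := by simp only [map_add]; ring
  map_smul' c a := by simp only [map_smul, ← smul_C, smul_add, smul_mul_assoc, RingHom.id_apply]

theorem firstOrderJet_apply (a : R) : D.firstOrderJet a = C a + C (D a) * X :=
  rfl

theorem firstOrderJet_mem_jetSubalgebra (a : R) : D.firstOrderJet a ∈ D.jetSubalgebra := by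
  simp [mem_jetSubalgebra, firstOrderJet_apply, coeff_C]

theorem C_mul_X_pow_mem_jetSubalgebra (a : R) {m : ℕ} (hm : 2 ≤ m) :
    C a * X ^ m ∈ D.jetSubalgebra := by
  rw [mem_jetSubalgebra, coeff_C_mul_X_pow, coeff_C_mul_X_pow, if_neg (by omega), if_neg (by omega),
    map_zero]

theorem jetSubalgebra_le {T : Set R} (hT : Submodule.span k T = ⊤) {A : Submodule k R[X]}
    (hjet : ∀ a ∈ T, D.firstOrderJet a ∈ A) (hhigh : ∀ a ∈ T, ∀ m, 2 ≤ m → C a * X ^ m ∈ A) :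
    Subalgebra.toSubmodule D.jetSubalgebra ≤ A := by
  intro p hp
  rw [Subalgebra.mem_toSubmodule, mem_jetSubalgebra] at hp
  have hhigh' (m : ℕ) (hm : 2 ≤ m) (a : R) : C a * X ^ m ∈ A := by
    have hmono : ∀ b ∈ T, (monomial m).restrictScalars k b ∈ A := fun b hb => by
      simpa only [LinearMap.coe_restrictScalars, ← C_mul_X_pow_eq_monomial] using hhigh b hb m hm
    simpa only [LinearMap.coe_restrictScalars, ← C_mul_X_pow_eq_monomial] using
      Submodule.map_mem_of_span_eq_top hT _ hmono a
  have hrest : p - D.firstOrderJet (p.coeff 0) ∈ A := by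
    set q := p - D.firstOrderJet (p.coeff 0)
    have hq0 : q.coeff 0 = 0 := by simp [q, firstOrderJet_apply, coeff_C]
    have hq1 : q.coeff 1 = 0 := by simp [q, firstOrderJet_apply, coeff_C, hp]
    rw [q.as_sum_support_C_mul_X_pow]
    refine A.sum_mem fun m hm => hhigh' m ?_ _
    contrapose! hm
    interval_cases m <;> simp [hq0, hq1]
  simpa using A.add_mem (Submodule.map_mem_of_span_eq_top hT _ hjet (p.coeff 0)) hrest

end Derivation

theorem mkDerivation_neg_X_pow_three_firstOrderJet_X_pow {k : Type*} [CommRing k] (n : ℕ) :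
    (mkDerivation k (-(X ^ 3) : k[X])).firstOrderJet (X ^ n) =
      C (X ^ n) - (n : k[X][X]) * C (X ^ (n + 2)) * X := by
  have hderiv : derivative (X ^ n : k[X]) * X ^ 3 = (n : k[X]) * X ^ (n + 2) := by
    cases n with
    | zero => simp
    | succ n => rw [derivative_X_pow_succ, ← Nat.cast_succ, C_eq_natCast]; ring
  rw [Derivation.firstOrderJet_apply, mkDerivation_apply, smul_eq_mul, mul_neg, hderiv, map_neg,
    map_mul, map_natCast]
  ring

/-- Let `Q ⊂ k[y,t]` be the `k`-subalgebra generated by `{yⁿ - n yⁿ⁺² t : n ≥ 1}` and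
`{yⁿ tᵐ : n ≥ 0, m ≥ 2}`. An element `f(y) + g(y)t + (t-degree ≥ 2 terms)` lies in `Q`
iff `g = -y³ f'`. Here `k[y,t]` is modelled as `(k[y])[t]`. -/
theorem stmt_7 (k : Type*) [Field k] :
    ∀ p : Polynomial (Polynomial k),
      p ∈ Algebra.adjoin k
          ({q : Polynomial (Polynomial k) | ∃ n : ℕ, 1 ≤ n ∧
              q = C ((X : Polynomial k) ^ n) - (n : Polynomial (Polynomial k))
                    * C ((X : Polynomial k) ^ (n + 2)) * X} ∪
           {q : Polynomial (Polynomial k) | ∃ n m : ℕ, 2 ≤ m ∧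
              q = C ((X : Polynomial k) ^ n) * X ^ m})
        ↔ p.coeff 1 = -((X : Polynomial k) ^ 3) * derivative (p.coeff 0) := by
  intro p
  set D := mkDerivation k (-(X ^ 3) : k[X])
  have hjet := mkDerivation_neg_X_pow_three_firstOrderJet_X_pow (k := k)
  have hspan : Submodule.span k (Set.range fun n : ℕ => (X : k[X]) ^ n) = ⊤ := by
    simpa [coe_basisMonomials, monomial_one_right_eq_X_pow] using (basisMonomials k).span_eq
  suffices h : Algebra.adjoin k _ = D.jetSubalgebra by
    rw [h, D.mem_jetSubalgebra, mkDerivation_apply, smul_eq_mul, mul_comm]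
  refine le_antisymm (Algebra.adjoin_le ?_)
    (Subalgebra.toSubmodule.le_iff_le.1 (D.jetSubalgebra_le hspan ?_ ?_))
  · rintro q (⟨n, -, rfl⟩ | ⟨n, m, hm, rfl⟩)
    · exact hjet n ▸ D.firstOrderJet_mem_jetSubalgebra _
    · exact D.C_mul_X_pow_mem_jetSubalgebra _ hm
  · rintro _ ⟨n, rfl⟩
    rcases n.eq_zero_or_pos with rfl | hn
    · simp [D.firstOrderJet_apply]
    · exact Algebra.subset_adjoin (Or.inl ⟨n, hn, hjet n⟩)
  · rintro _ ⟨n, rfl⟩ m hm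
    exact Algebra.subset_adjoin (Or.inr ⟨n, m, hm, rfl⟩)
end
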